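/- arXiv:2306.16518 — 8 statements merged into one kernel-verified Lean document; each statement's English description precedes it below -/
import Mathlib

section
/- If A is a symmetric (0,2)-tensor with rank A = 2 on an n-dimensional space with metric g, then A ∧ A² = (tr(A)/2) A ∧ A, where ∧ is the Kulkarni–Nomizu product. -/
open Module

variable {V : Type*} [AddCommGroup V] [Module ℝ V]

/-- Kulkarni–Nomizu product of two (0,2)-tensors. -/
def KN (A B : V → V → ℝ) : V → V → V → V → ℝ := fun X1 X2 X3 X4 =>
  A X1 X4 * B X2 X3 + A X2 X3 * B X1 X4 - A X1 X3 * B X2 X4 - A X2 X4 * B X1 X3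

/-- The endomorphism `X ∧_A Y` applied to `Z`. -/
def wedgeEnd (A : V → V → ℝ) (X Y Z : V) : V := A Y Z • X - A X Z • Y

/-- Tachibana tensor `Q(A,T)` of a symmetric (0,2)-tensor `A` and a (0,4)-tensor `T`. -/
def Tach (A : V → V → ℝ) (T : V → V → V → V → ℝ) : V → V → V → V → V → V → ℝ :=
  fun X1 X2 X3 X4 X Y =>
    -(T (wedgeEnd A X Y X1) X2 X3 X4) - T X1 (wedgeEnd A X Y X2) X3 X4
      - T X1 X2 (wedgeEnd A X Y X3) X4 - T X1 X2 X3 (wedgeEnd A X Y X4)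

/-- if a symmetric (0,2)-tensor `A` has rank 2, then
`A ∧ A² = (tr(A)/2) A ∧ A`. -/
theorem statement_7 [FiniteDimensional ℝ V] (hn : 3 ≤ finrank ℝ V)
    (g : LinearMap.BilinForm ℝ V) (hgs : ∀ X Y, g X Y = g Y X)
    (hgn : g.Nondegenerate)
    (a : V →ₗ[ℝ] V) (ha : ∀ X Y, g (a X) Y = g (a Y) X)
    (hrank : finrank ℝ (LinearMap.range a) = 2) (X1 X2 X3 X4 : V) :
    KN (fun x y => g (a x) y) (fun x y => g (a (a x)) y) X1 X2 X3 X4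
      = (LinearMap.trace ℝ V a / 2)
          * KN (fun x y => g (a x) y) (fun x y => g (a x) y) X1 X2 X3 X4 := by
  classical
  have hmem : ∀ x : V, a x ∈ LinearMap.range a := fun x => LinearMap.mem_range_self a x
  let bW : Basis (Fin 2) ℝ (LinearMap.range a) :=
    finBasisOfFinrankEq ℝ (LinearMap.range a) hrank
  set e : Fin 2 → V := fun k => (bW k : V) with he_def
  have hYex : ∀ k : Fin 2, ∃ y, a y = e k := fun k => LinearMap.mem_range.mp (bW k).2
  choose Y hY using hYex
  set c : V → Fin 2 → ℝ := fun X k => bW.repr ⟨a X, hmem X⟩ k with hc_def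
  set m : Fin 2 → Fin 2 → ℝ := fun k l => g (e k) (Y l) with hm_def
  -- coordinate expansion of `a X`
  have hrep : ∀ X : V, a X = c X 0 • e 0 + c X 1 • e 1 := by
    intro X
    have h := congrArg (Subtype.val) (bW.sum_repr ⟨a X, hmem X⟩)
    rw [Fin.sum_univ_two] at h
    simpa [hc_def, he_def] using h.symm
  -- bilinearity expansions
  have gA1 : ∀ X Z : V, g (a X) Z = c X 0 * g (e 0) Z + c X 1 * g (e 1) Z := by
    intro X Z
    rw [hrep X]
    simp [LinearMap.add_apply, LinearMap.smul_apply, smul_eq_mul]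
  have gA2 : ∀ Z X : V, g Z (a X) = c X 0 * g Z (e 0) + c X 1 * g Z (e 1) := by
    intro Z X
    rw [hrep X]
    simp [smul_eq_mul]
  have gek : ∀ (k : Fin 2) (Z : V), g (e k) Z = c Z 0 * m 0 k + c Z 1 * m 1 k := by
    intro k Z
    rw [show e k = a (Y k) from (hY k).symm, ha (Y k) Z, gA1 Z (Y k)]
  -- symmetry of m
  have hmsym : m 1 0 = m 0 1 := by
    simp only [hm_def]
    rw [show e 1 = a (Y 1) from (hY 1).symm, show e 0 = a (Y 0) from (hY 0).symm,
      ha (Y 1) (Y 0)]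
  have hA : ∀ X Z : V, g (a X) Z
      = c X 0 * (c Z 0 * m 0 0 + c Z 1 * m 1 0)
        + c X 1 * (c Z 0 * m 0 1 + c Z 1 * m 1 1) := by
    intro X Z
    rw [gA1 X Z, gek 0 Z, gek 1 Z]
  have geke : ∀ k l : Fin 2, g (e k) (e l)
      = c (e l) 0 * m 0 k + c (e l) 1 * m 1 k := fun k l => gek k (e l)
  have hB : ∀ X Z : V, g (a (a X)) Z
      = c X 0 * (c Z 0 * (c (e 0) 0 * m 0 0 + c (e 0) 1 * m 1 0)
          + c Z 1 * (c (e 0) 0 * m 0 1 + c (e 0) 1 * m 1 1))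
        + c X 1 * (c Z 0 * (c (e 1) 0 * m 0 0 + c (e 1) 1 * m 1 0)
          + c Z 1 * (c (e 1) 0 * m 0 1 + c (e 1) 1 * m 1 1)) := by
    intro X Z
    rw [ha (a X) Z, gA2 (a Z) X, gA1 Z (e 0), gA1 Z (e 1),
      geke 0 0, geke 1 0, geke 0 1, geke 1 1]
  -- trace
  have hres : ∀ x ∈ LinearMap.range a, a x ∈ LinearMap.range a := fun x _ => hmem x
  have htr : LinearMap.trace ℝ V a = c (e 0) 0 + c (e 1) 1 := by
    rw [← LinearMap.trace_restrict_eq_of_forall_mem (LinearMap.range a) a hmem hres,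
      LinearMap.trace_eq_matrix_trace ℝ bW]
    rw [Matrix.trace, Fin.sum_univ_two]
    simp only [Matrix.diag, LinearMap.toMatrix_apply]
    rfl
  simp only [KN]
  rw [hB X2 X3, hB X1 X4, hB X2 X4, hB X1 X3,
    hA X1 X4, hA X2 X3, hA X1 X3, hA X2 X4, htr]
  linear_combination ((c X1 0 * c X2 1 - c X1 1 * c X2 0)
      * (c X3 0 * c X4 1 - c X3 1 * c X4 0)
      * (m 0 0 * c (e 1) 0 - m 0 1 * c (e 0) 0
          + m 1 0 * c (e 1) 1 - m 1 1 * c (e 0) 1)) * hmsym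
end

section
/- If A is a symmetric (0,2)-tensor with rank A = 2, then Q(A², (1/2) A ∧ A) = 0, i.e., the Tachibana tensor of A² and the generalized curvature tensor (1/2)A ∧ A vanishes. -/
/-!
For any symmetric forms `B`, `C` one has `Q(C, B ∧ B) = -2 Q(B, B ∧ C)` and `Q(B, B ∧ B) = 0`.
If `a` has rank 2, it acts on the line `Λ²(range a)` by its trace, which gives
`A ∧ A² = (tr a / 2) A ∧ A`. Hence `Q(A², ½ A ∧ A) = -Q(A, A ∧ A²) = -(tr a / 2) Q(A, A ∧ A) = 0`.
-/

open Module

variable {V : Type*} [AddCommGroup V] [Module ℝ V]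

open LinearMap (BilinForm)

theorem Tach_const_mul (A : V → V → ℝ) (k : ℝ) (T : V → V → V → V → ℝ) (X1 X2 X3 X4 X Y : V) :
    Tach A (fun b c d e => k * T b c d e) X1 X2 X3 X4 X Y = k * Tach A T X1 X2 X3 X4 X Y := by
  simp only [Tach]
  ring

section Symmetric

variable {B C : BilinForm ℝ V}

theorem Tach_KN_self_eq_zero (hB : B.IsSymm) (X1 X2 X3 X4 X Y : V) :
    Tach (fun x y => B x y) (KN (fun x y => B x y) (fun x y => B x y)) X1 X2 X3 X4 X Y = 0 := by
  simp only [Tach, KN, wedgeEnd, map_sub, map_smul, LinearMap.sub_apply, LinearMap.smul_apply,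
    smul_eq_mul, hB.eq]
  ring

theorem Tach_KN_self_eq_neg_two_mul_Tach_KN (hB : B.IsSymm) (hC : C.IsSymm) (X1 X2 X3 X4 X Y : V) :
    Tach (fun x y => C x y) (KN (fun x y => B x y) (fun x y => B x y)) X1 X2 X3 X4 X Y =
      -2 * Tach (fun x y => B x y) (KN (fun x y => B x y) (fun x y => C x y)) X1 X2 X3 X4 X Y := by
  simp only [Tach, KN, wedgeEnd, map_sub, map_smul, LinearMap.sub_apply, LinearMap.smul_apply,
    smul_eq_mul, hB.eq, hC.eq]
  ring

end Symmetric

-- With `(f ∧ h)(u ∧ v) = f u * h v - f v * h u`: on a plane, `r` acts on `Λ² W` as a derivation,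
-- i.e. by multiplication with its trace.
theorem wedge_derivation_eq_trace_mul_of_finrank_eq_two {W : Type*} [AddCommGroup W] [Module ℝ W]
    (hW : finrank ℝ W = 2) (f h : W →ₗ[ℝ] ℝ) (r : W →ₗ[ℝ] W) (u v : W) :
    (f u * h (r v) - f (r v) * h u) + (f (r u) * h v - f v * h (r u)) =
      LinearMap.trace ℝ W r * (f u * h v - f v * h u) := by
  have : FiniteDimensional ℝ W := Module.finite_of_finrank_eq_succ hW
  let b : Basis (Fin 2) ℝ W := finBasisOfFinrankEq ℝ W hW
  have hexp (w : W) : w = b.repr w 0 • b 0 + b.repr w 1 • b 1 := by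
    simpa only [Fin.sum_univ_two] using (b.sum_repr w).symm
  have hr (φ : W →ₗ[ℝ] ℝ) (j : Fin 2) :
      φ (r (b j)) = b.repr (r (b j)) 0 * φ (b 0) + b.repr (r (b j)) 1 * φ (b 1) := by
    conv_lhs => rw [hexp (r (b j))]
    simp only [map_add, map_smul, smul_eq_mul]
  rw [LinearMap.trace_eq_matrix_trace ℝ b, Matrix.trace_fin_two, LinearMap.toMatrix_apply,
    LinearMap.toMatrix_apply, hexp u, hexp v]
  simp only [map_add, map_smul, smul_eq_mul, hr]
  ring

theorem KN_comp_sq_eq_of_finrank_range_eq_two [FiniteDimensional ℝ V] (g : BilinForm ℝ V)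
    (a : V →ₗ[ℝ] V) (hrank : finrank ℝ (LinearMap.range a) = 2) :
    KN (fun x y => g (a x) y) (fun x y => g (a (a x)) y) = fun x1 x2 x3 x4 =>
      LinearMap.trace ℝ V a / 2 * KN (fun x y => g (a x) y) (fun x y => g (a x) y) x1 x2 x3 x4 := by
  funext x1 x2 x3 x4
  have hmem (x : V) : a x ∈ LinearMap.range a := LinearMap.mem_range_self a x
  have hplane := wedge_derivation_eq_trace_mul_of_finrank_eq_two hrank
    (LinearMap.flip g x4 ∘ₗ (LinearMap.range a).subtype)
    (LinearMap.flip g x3 ∘ₗ (LinearMap.range a).subtype)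
    (a.restrict fun x _ => hmem x) ⟨a x1, hmem x1⟩ ⟨a x2, hmem x2⟩
  rw [LinearMap.trace_restrict_eq_of_forall_mem _ a hmem] at hplane
  simp only [LinearMap.comp_apply, LinearMap.flip_apply, Submodule.subtype_apply,
    LinearMap.coe_restrict_apply] at hplane
  simp only [KN]
  linear_combination hplane

theorem statement_8_general [FiniteDimensional ℝ V]
    (g : LinearMap.BilinForm ℝ V) (hgs : ∀ X Y, g X Y = g Y X)
    (a : V →ₗ[ℝ] V) (ha : ∀ X Y, g (a X) Y = g (a Y) X)
    (hrank : finrank ℝ (LinearMap.range a) = 2) (X1 X2 X3 X4 X Y : V) :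
    Tach (fun x y => g (a (a x)) y)
      (fun b c d e => (1/2) * KN (fun x y => g (a x) y) (fun x y => g (a x) y) b c d e)
      X1 X2 X3 X4 X Y = 0 := by
  have hA : BilinForm.IsSymm (g ∘ₗ a) := ⟨ha⟩
  have hA2 : BilinForm.IsSymm (g ∘ₗ a ∘ₗ a) :=
    ⟨fun u v => (ha (a u) v).trans ((hgs (a v) (a u)).trans (ha (a v) u).symm)⟩
  have hswap := Tach_KN_self_eq_neg_two_mul_Tach_KN hA hA2 X1 X2 X3 X4 X Y
  have hself := Tach_KN_self_eq_zero hA X1 X2 X3 X4 X Y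
  simp only [LinearMap.comp_apply] at hswap hself
  rw [Tach_const_mul, hswap, KN_comp_sq_eq_of_finrank_range_eq_two g a hrank, Tach_const_mul,
    hself]
  ring

/-- if a symmetric (0,2)-tensor `A` has rank 2, then
`Q(A², (1/2) A ∧ A) = 0`. -/
theorem statement_8 [FiniteDimensional ℝ V]
    (g : LinearMap.BilinForm ℝ V) (hgs : ∀ X Y, g X Y = g Y X)
    (hgn : g.Nondegenerate)
    (a : V →ₗ[ℝ] V) (ha : ∀ X Y, g (a X) Y = g (a Y) X)
    (hrank : finrank ℝ (LinearMap.range a) = 2) (X1 X2 X3 X4 X Y : V) :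
    Tach (fun x y => g (a (a x)) y)
      (fun b c d e => (1/2) * KN (fun x y => g (a x) y) (fun x y => g (a x) y) b c d e)
      X1 X2 X3 X4 X Y = 0 :=
  statement_8_general g hgs a ha hrank X1 X2 X3 X4 X Y
end

section
/- Let A be a symmetric (0,2)-tensor on an n-dimensional (n ≥ 4) space with metric g such that rank(A − α g) = 1 for some scalar α. Then g ∧ A² + ((n−2)/2) A ∧ A − tr(A) g ∧ A + (((tr A)² − tr(A²))/(2(n−1))) g ∧ g = 0. -/
open Module

variable {V : Type*} [AddCommGroup V] [Module ℝ V]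

/-!
Rank one of `a - α • id` means `a = α • id + φ ⊗ w`, and `g`-self-adjointness of `φ ⊗ w` forces
`g (a X) Y = α g(X, Y) + c φ(X) φ(Y)`. Since `a ∘ a = α² • id + (2α + φ w) • φ ⊗ w`, the traces are
`nα + φ w` and `nα² + (2α + φ w) φ w`. Expanding by bilinearity of `∧`, the coefficients of
`g ∧ g` and `g ∧ (φ ⊗ φ)` cancel, while `(φ ⊗ φ) ∧ (φ ⊗ φ) = 0`.
-/

theorem LinearMap.exists_ne_zero_eq_smulRight_of_finrank_range_eq_one {K M N : Type*} [Field K]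
    [AddCommGroup M] [Module K M] [AddCommGroup N] [Module K N] {B : M →ₗ[K] N}
    (h : finrank K (range B) = 1) : ∃ (φ : M →ₗ[K] K) (w : N), φ ≠ 0 ∧ B = φ.smulRight w := by
  have : Module.Finite K (range B) := Module.finite_of_finrank_eq_succ h
  let b := Module.finBasisOfFinrankEq K (range B) h
  have hB : B = ((b.coord 0).comp B.rangeRestrict).smulRight (b 0 : N) := by
    ext X
    have := b.sum_repr (B.rangeRestrict X)
    rw [Fin.sum_univ_one] at this
    simpa using congrArg Subtype.val this.symm
  refine ⟨_, _, fun hφ => ?_, hB⟩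
  rw [hφ, LinearMap.zero_smulRight] at hB
  subst hB
  rw [LinearMap.range_zero, finrank_bot] at h
  exact zero_ne_one h

theorem LinearMap.exists_eq_smul_of_mul_apply_comm {K M : Type*} [Field K]
    [AddCommGroup M] [Module K M] {φ ψ : M →ₗ[K] K} (hφ : φ ≠ 0)
    (h : ∀ X Y, φ X * ψ Y = φ Y * ψ X) : ∃ c : K, ψ = c • φ := by
  obtain ⟨X₀, hX₀⟩ : ∃ X₀, φ X₀ ≠ 0 := by simpa [DFunLike.ne_iff] using hφ
  refine ⟨ψ X₀ / φ X₀, LinearMap.ext fun Y => ?_⟩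
  rw [LinearMap.smul_apply, smul_eq_mul, div_mul_eq_mul_div, eq_div_iff hX₀, mul_comm, h, mul_comm]

theorem LinearMap.BilinForm.exists_apply_smulRight_eq_mul {K M : Type*} [Field K]
    [AddCommGroup M] [Module K M] (g : LinearMap.BilinForm K M) {φ : M →ₗ[K] K} (hφ : φ ≠ 0)
    (w : M) (hsa : ∀ X Y, g (φ.smulRight w X) Y = g (φ.smulRight w Y) X) :
    ∃ c : K, ∀ X Y, g (φ.smulRight w X) Y = c * (φ X * φ Y) := by
  simp only [LinearMap.smulRight_apply, map_smul, LinearMap.smul_apply, smul_eq_mul] at hsa ⊢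
  obtain ⟨c, hc⟩ := LinearMap.exists_eq_smul_of_mul_apply_comm hφ hsa
  refine ⟨c, fun X Y => ?_⟩
  rw [hc, LinearMap.smul_apply, smul_eq_mul]
  ring

theorem LinearMap.smul_id_add_smulRight_comp_self {R M : Type*} [CommRing R] [AddCommGroup M]
    [Module R M] (α : R) (φ : M →ₗ[R] R) (w : M) :
    (α • id + φ.smulRight w) ∘ₗ (α • id + φ.smulRight w)
      = α ^ 2 • id + (2 * α + φ w) • φ.smulRight w := by
  ext X
  simp only [LinearMap.comp_apply, LinearMap.add_apply, LinearMap.smul_apply, LinearMap.id_apply,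
    LinearMap.smulRight_apply, map_add, map_smul]
  module

theorem LinearMap.trace_smul_id_add_smul_smulRight {R M : Type*} [CommRing R] [AddCommGroup M]
    [Module R M] [Module.Free R M] [Module.Finite R M] (α c : R) (φ : M →ₗ[R] R) (w : M) :
    trace R M (α • id + c • φ.smulRight w) = α * finrank R M + c * φ w := by
  rw [map_add, map_smul, map_smul, trace_id, trace_smulRight, smul_eq_mul, smul_eq_mul]

-- `α * n + μ` and `α ^ 2 * n + (2 * α + μ) * μ` are the traces of `a` and `a ∘ a` when
-- `a = α • id + φ ⊗ w` with `μ = φ w`.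
theorem KN_combination_eq_zero_of_eq_smul_add_mul_self {E : Type*} (G : E → E → ℝ)
    (φ : E → ℝ) (α c μ n : ℝ) (hn : n ≠ 1) (X1 X2 X3 X4 : E) :
    KN G (fun x y => α ^ 2 * G x y + c * (2 * α + μ) * (φ x * φ y)) X1 X2 X3 X4
      + ((n - 2) / 2) * KN (fun x y => α * G x y + c * (φ x * φ y))
          (fun x y => α * G x y + c * (φ x * φ y)) X1 X2 X3 X4
      - (α * n + μ) * KN G (fun x y => α * G x y + c * (φ x * φ y)) X1 X2 X3 X4
      + (((α * n + μ) ^ 2 - (α ^ 2 * n + (2 * α + μ) * μ)) / (2 * (n - 1)))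
          * KN G G X1 X2 X3 X4
      = 0 := by
  have : n - 1 ≠ 0 := sub_ne_zero.mpr hn
  simp only [KN]
  field_simp
  ring

theorem statement_9_general [FiniteDimensional ℝ V] (hn : 4 ≤ finrank ℝ V)
    (g : LinearMap.BilinForm ℝ V) (hgs : ∀ X Y, g X Y = g Y X)
    (a : V →ₗ[ℝ] V) (ha : ∀ X Y, g (a X) Y = g (a Y) X) (α : ℝ)
    (hrank : finrank ℝ (LinearMap.range (a - α • LinearMap.id)) = 1)
    (X1 X2 X3 X4 : V) :
    KN (fun x y => g x y) (fun x y => g (a (a x)) y) X1 X2 X3 X4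
      + (((finrank ℝ V : ℝ) - 2) / 2)
          * KN (fun x y => g (a x) y) (fun x y => g (a x) y) X1 X2 X3 X4
      - LinearMap.trace ℝ V a * KN (fun x y => g x y) (fun x y => g (a x) y) X1 X2 X3 X4
      + (((LinearMap.trace ℝ V a) ^ 2 - LinearMap.trace ℝ V (a ∘ₗ a))
            / (2 * ((finrank ℝ V : ℝ) - 1)))
          * KN (fun x y => g x y) (fun x y => g x y) X1 X2 X3 X4
      = 0 := by
  obtain ⟨φ, w, hφ, hB⟩ := LinearMap.exists_ne_zero_eq_smulRight_of_finrank_range_eq_one hrank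
  have ha_eq : a = α • LinearMap.id + φ.smulRight w := by rw [← hB]; abel
  obtain ⟨c, hc⟩ := g.exists_apply_smulRight_eq_mul hφ w fun X Y => by
    simp only [← hB, LinearMap.sub_apply, LinearMap.smul_apply, LinearMap.id_apply, map_sub,
      map_smul, LinearMap.smul_apply, smul_eq_mul, ha X Y, hgs X Y]
  have hgA : ∀ X Y, g (a X) Y = α * g X Y + c * (φ X * φ Y) := fun X Y => by
    rw [ha_eq]
    simp only [LinearMap.add_apply, LinearMap.smul_apply, LinearMap.id_apply, map_add, map_smul,
      smul_eq_mul, hc]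
  have hgA2 : ∀ X Y, g (a (a X)) Y = α ^ 2 * g X Y + c * (2 * α + φ w) * (φ X * φ Y) :=
    fun X Y => by
    rw [show a (a X) = (a ∘ₗ a) X from rfl, ha_eq, LinearMap.smul_id_add_smulRight_comp_self]
    simp only [LinearMap.add_apply, LinearMap.smul_apply, LinearMap.id_apply, map_add, map_smul,
      smul_eq_mul, hc]
    ring
  have htrA : LinearMap.trace ℝ V a = α * finrank ℝ V + φ w := by
    rw [ha_eq]
    simpa only [one_smul, one_mul] using LinearMap.trace_smul_id_add_smul_smulRight α 1 φ w
  have htrA2 : LinearMap.trace ℝ V (a ∘ₗ a) = α ^ 2 * finrank ℝ V + (2 * α + φ w) * φ w := by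
    rw [ha_eq, LinearMap.smul_id_add_smulRight_comp_self, LinearMap.trace_smul_id_add_smul_smulRight]
  -- `hgA2` must fire before `hgA`, which also matches `g (a (a x)) y`.
  simp only [hgA2]
  simp only [hgA, htrA, htrA2]
  exact KN_combination_eq_zero_of_eq_smul_add_mul_self (fun x y => g x y) φ α c (φ w)
    (finrank ℝ V) (by exact_mod_cast (by omega : finrank ℝ V ≠ 1)) X1 X2 X3 X4

/-- if `rank (A − α g) = 1` then
`g ∧ A² + ((n−2)/2) A ∧ A − tr(A) g ∧ A + (((tr A)² − tr(A²))/(2(n−1))) g ∧ g = 0`. -/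
theorem statement_9 [FiniteDimensional ℝ V] (hn : 4 ≤ finrank ℝ V)
    (g : LinearMap.BilinForm ℝ V) (hgs : ∀ X Y, g X Y = g Y X)
    (hgn : g.Nondegenerate)
    (a : V →ₗ[ℝ] V) (ha : ∀ X Y, g (a X) Y = g (a Y) X) (α : ℝ)
    (hrank : finrank ℝ (LinearMap.range (a - α • LinearMap.id)) = 1)
    (X1 X2 X3 X4 : V) :
    KN (fun x y => g x y) (fun x y => g (a (a x)) y) X1 X2 X3 X4
      + (((finrank ℝ V : ℝ) - 2) / 2)
          * KN (fun x y => g (a x) y) (fun x y => g (a x) y) X1 X2 X3 X4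
      - LinearMap.trace ℝ V a * KN (fun x y => g x y) (fun x y => g (a x) y) X1 X2 X3 X4
      + (((LinearMap.trace ℝ V a) ^ 2 - LinearMap.trace ℝ V (a ∘ₗ a))
            / (2 * ((finrank ℝ V : ℝ) - 1)))
          * KN (fun x y => g x y) (fun x y => g x y) X1 X2 X3 X4
      = 0 :=
  statement_9_general hn g hgs a ha α hrank X1 X2 X3 X4
end

section
/- Let A be a symmetric (0,2)-tensor with rank(A − αg) = 1 for some scalar α, on an n-dimensional space. Then A² − (tr(A²)/n) g = (tr(A) − (n−2)α)(A − (tr(A)/n) g). -/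
open Module

variable {V : Type*} [AddCommGroup V] [Module ℝ V]

lemma rank_one_sq [FiniteDimensional ℝ V] (b : V →ₗ[ℝ] V)
    (hb : finrank ℝ (LinearMap.range b) = 1) (X : V) :
    b (b X) = (LinearMap.trace ℝ V b) • b X := by
  obtain ⟨v, hv⟩ := finrank_eq_one_iff' (V := LinearMap.range b) |>.mp hb
  obtain ⟨hv0, hall⟩ := hv
  have hv0' : (v : V) ≠ 0 := fun h => hv0 (Subtype.ext h)
  have hex : ∀ X : V, ∃ c : ℝ, b X = c • (v : V) := by
    intro X
    obtain ⟨c, hc⟩ := hall ⟨b X, LinearMap.mem_range_self b X⟩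
    exact ⟨c, by simpa using congrArg Subtype.val hc.symm⟩
  have huniq : ∀ {c d : ℝ}, c • (v : V) = d • (v : V) → c = d := by
    intro c d h
    by_contra hcd
    have : (c - d) • (v : V) = 0 := by rw [sub_smul, h, sub_self]
    exact hv0' ((smul_eq_zero.mp this).resolve_left (sub_ne_zero.mpr hcd))
  set f : V → ℝ := fun X => (hex X).choose with hf
  have hfspec : ∀ X : V, b X = f X • (v : V) := fun X => (hex X).choose_spec
  have fadd : ∀ X Y, f (X + Y) = f X + f Y := by
    intro X Y
    apply huniq
    rw [← hfspec, map_add, hfspec X, hfspec Y, add_smul]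
  have fsmul : ∀ (r : ℝ) X, f (r • X) = r * f X := by
    intro r X
    apply huniq
    rw [← hfspec, map_smul, hfspec X, smul_smul]
  set fL : V →ₗ[ℝ] ℝ := ⟨⟨f, fadd⟩, fsmul⟩ with hfL
  have hbeq : b = dualTensorHom ℝ V V (fL ⊗ₜ (v : V)) := by
    ext Z; rw [dualTensorHom_apply]; exact hfspec Z
  have htr : LinearMap.trace ℝ V b = f (v : V) := by
    have := LinearMap.trace_eq_contract_apply ℝ V (fL ⊗ₜ (v : V))
    rw [congrArg (LinearMap.trace ℝ V) hbeq, this, contractLeft_apply]; rfl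
  rw [htr, hfspec X, map_smul, hfspec (v : V), smul_smul, smul_smul, mul_comm]


/-- if `rank (A − α g) = 1` then
`A² − (tr(A²)/n) g = (tr(A) − (n−2)α)(A − (tr(A)/n) g)`. -/
theorem statement_10 [FiniteDimensional ℝ V] (hn : 3 ≤ finrank ℝ V)
    (g : LinearMap.BilinForm ℝ V) (hgs : ∀ X Y, g X Y = g Y X)
    (hgn : g.Nondegenerate)
    (a : V →ₗ[ℝ] V) (ha : ∀ X Y, g (a X) Y = g (a Y) X) (α : ℝ)
    (hrank : finrank ℝ (LinearMap.range (a - α • LinearMap.id)) = 1)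
    (X Y : V) :
    g (a (a X)) Y - (LinearMap.trace ℝ V (a ∘ₗ a) / (finrank ℝ V : ℝ)) * g X Y
      = (LinearMap.trace ℝ V a - ((finrank ℝ V : ℝ) - 2) * α)
          * (g (a X) Y - (LinearMap.trace ℝ V a / (finrank ℝ V : ℝ)) * g X Y) := by
  set n : ℝ := (finrank ℝ V : ℝ) with hnn
  have hn0 : n ≠ 0 := by
    have : 0 < finrank ℝ V := by omega
    positivity
  set b : V →ₗ[ℝ] V := a - α • LinearMap.id with hbdef
  set t : ℝ := LinearMap.trace ℝ V b with htdef
  have hbapp : ∀ Z, b Z = a Z - α • Z := fun Z => by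
    simp [hbdef, LinearMap.sub_apply, LinearMap.smul_apply]
  have haapp : ∀ Z, a Z = b Z + α • Z := fun Z => by rw [hbapp]; abel
  have hbb : ∀ Z, b (b Z) = t • b Z := rank_one_sq b hrank
  -- trace of a
  have htra : LinearMap.trace ℝ V a = t + α * n := by
    rw [htdef, hbdef, map_sub, map_smul, LinearMap.trace_id, smul_eq_mul, hnn]
    ring
  -- trace of a ∘ a
  have haa : a ∘ₗ a = (t + 2 * α) • b + (α ^ 2) • LinearMap.id := by
    ext Z
    simp only [LinearMap.comp_apply, LinearMap.add_apply, LinearMap.smul_apply,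
      LinearMap.id_apply]
    rw [haapp Z, haapp (b Z + α • Z), map_add, map_smul, hbb Z]
    module
  have htraa : LinearMap.trace ℝ V (a ∘ₗ a) = t * t + 2 * α * t + α ^ 2 * n := by
    rw [haa, map_add, map_smul, map_smul, LinearMap.trace_id, ← htdef, smul_eq_mul,
      smul_eq_mul, hnn]
    ring
  -- expand g values
  have h1 : g (a X) Y = g (b X) Y + α * g X Y := by
    rw [haapp X, map_add, map_smul]
    simp [LinearMap.add_apply, LinearMap.smul_apply, smul_eq_mul]
  have h2 : g (a (a X)) Y = (t + 2 * α) * g (b X) Y + α ^ 2 * g X Y := by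
    have := congrArg (fun f : V →ₗ[ℝ] V => g (f X) Y) haa
    simp only [LinearMap.comp_apply, LinearMap.add_apply, LinearMap.smul_apply,
      LinearMap.id_apply, map_add, map_smul] at this
    simpa [smul_eq_mul] using this
  rw [h1, h2, htra, htraa]
  field_simp
  ring
end

section
/- Suppose a symmetric (0,2)-tensor A on an n-dimensional (n ≥ 4) space satisfies E(A) := g ∧ A² + ((n−2)/2) A ∧ A − tr(A) g ∧ A + (((tr A)² − tr(A²))/(2(n−1))) g ∧ g = 0. Then there exists a scalar ρ with A² − (tr(A²)/n) g = ρ (A − (tr A/n) g), and moreover (A − ((tr A − ρ)/(n−2)) g) ∧ (A − ((tr A − ρ)/(n−2)) g) = 0. -/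
open Module

variable {V : Type*} [AddCommGroup V] [Module ℝ V]

/-!
Evaluating `E(A) = 0` at `(X, Y, Z, W)` with `X ⟂ Z, AZ, A²Z` (such `X ≠ 0` exist as `n ≥ 4`)
and using nondegeneracy in `W` gives a linear relation between `X`, `AX`, `A²X` whose
coefficients are `g(Y, ·)` of fixed combinations of `Z`, `AZ`, `A²Z`. Choosing `Y` dual to `A²Z`
shows `A²Z ∈ span(Z, AZ)` for every `Z`; a vector whose `ℝ[X]`-annihilator is that of all of `V`
makes this a global relation `A² = ρ A + β g`, and the first claim follows by taking traces.
For a `Z` with `Z, AZ` independent, choosing `Y` dual to `Z` and to `AZ` shows that `A` acts on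
`{Z, AZ}ᗮ` as `μ = (tr A - ρ)/(n - 2)` and yields the relation between `β` and the coefficient
of `g ∧ g` under which `E(A) = ((n - 2)/2) (A - μ g) ∧ (A - μ g)`.
-/

open Polynomial

theorem Module.End.exists_forall_aeval_eq_zero_of_aeval_apply_eq_zero {K W : Type*} [Field K]
    [AddCommGroup W] [Module K W] [FiniteDimensional K W] (φ : Module.End K W) :
    ∃ v : W, ∀ p : K[X], aeval φ p v = 0 → aeval φ p = 0 := by
  obtain ⟨x, hx⟩ := Module.exists_ker_toSpanSingleton_eq_annihilator K[X] (Module.AEval' φ)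
  obtain ⟨v, rfl⟩ := (Module.AEval'.of φ).surjective x
  refine ⟨v, fun p hp => ?_⟩
  have hmem : p ∈ LinearMap.ker (LinearMap.toSpanSingleton K[X] _ (Module.AEval'.of φ v)) := by
    rw [LinearMap.mem_ker, LinearMap.toSpanSingleton_apply, ← Module.AEval.of_aeval_smul]
    simp [hp]
  rwa [hx, Module.AEval.annihilator_eq_ker_aeval] at hmem

theorem Module.End.exists_forall_apply_apply_eq_of_forall_exists {K W : Type*} [Field K]
    [AddCommGroup W] [Module K W] [FiniteDimensional K W] (φ : Module.End K W)
    (h : ∀ v, ∃ ρ β : K, φ (φ v) = ρ • φ v + β • v) :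
    ∃ ρ β : K, ∀ v, φ (φ v) = ρ • φ v + β • v := by
  obtain ⟨v, hv⟩ := φ.exists_forall_aeval_eq_zero_of_aeval_apply_eq_zero
  obtain ⟨ρ, β, hρβ⟩ := h v
  have hq := hv (X ^ 2 - C ρ * X - C β) (by simp [pow_two, hρβ])
  refine ⟨ρ, β, fun w => ?_⟩
  have hw := LinearMap.congr_fun hq w
  simp only [pow_two, aeval_sub, map_mul, aeval_X, aeval_C, LinearMap.sub_apply,
    Module.End.mul_apply, Module.algebraMap_end_apply, LinearMap.zero_apply] at hw
  linear_combination (norm := module) hw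

theorem LinearMap.BilinForm.exists_ne_zero_forall_apply_eq_zero {K W : Type*} [Field K]
    [AddCommGroup W] [Module K W] [FiniteDimensional K W] (g : LinearMap.BilinForm K W) {k : ℕ}
    (u : Fin k → W) (hk : k < finrank K W) : ∃ X ≠ 0, ∀ i, g X (u i) = 0 := by
  have hker := LinearMap.ker_ne_bot_of_finrank_lt (f := LinearMap.pi fun i => g.flip (u i))
    (by simpa using hk)
  obtain ⟨X, hX, hX0⟩ := (Submodule.ne_bot_iff _).mp hker
  have hX' := _root_.LinearMap.mem_ker.mp hX
  exact ⟨X, hX0, fun i => by simpa using _root_.congr_fun hX' i⟩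

theorem LinearMap.BilinForm.exists_apply_eq_one_of_notMem {K W : Type*} [Field K]
    [AddCommGroup W] [Module K W] [FiniteDimensional K W] {g : LinearMap.BilinForm K W}
    (hg : g.Nondegenerate) {S : Submodule K W} {w : W} (hw : w ∉ S) :
    ∃ Y, g Y w = 1 ∧ ∀ u ∈ S, g Y u = 0 := by
  obtain ⟨f, hfw, hfS⟩ := Submodule.exists_dual_map_eq_bot_of_notMem hw inferInstance
  refine ⟨(g.toDual hg).symm ((f w)⁻¹ • f), ?_, fun u hu => ?_⟩
  · rw [← LinearMap.BilinForm.toDual_def hg, LinearEquiv.apply_symm_apply]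
    simp [hfw]
  · rw [← LinearMap.BilinForm.toDual_def hg, LinearEquiv.apply_symm_apply]
    have hfu : f u = 0 := by simpa [hfS] using Submodule.mem_map_of_mem (f := f) hu
    simp [hfu]

theorem LinearMap.trace_comp_self_of_forall_apply_apply_eq {K W : Type*} [Field K]
    [AddCommGroup W] [Module K W] [FiniteDimensional K W] {φ : Module.End K W} {ρ β : K}
    (h : ∀ v, φ (φ v) = ρ • φ v + β • v) :
    LinearMap.trace K W (φ ∘ₗ φ) = ρ * LinearMap.trace K W φ + β * finrank K W := by
  rw [show φ ∘ₗ φ = ρ • φ + β • LinearMap.id from LinearMap.ext h]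
  simp [LinearMap.trace_id]

section KNCombination

variable (g : LinearMap.BilinForm ℝ V) (a : V →ₗ[ℝ] V)

/-- With `p = (n - 2) / 2`, `q = tr A` and `r = ((tr A)² - tr A²) / (2 (n - 1))` this is the
tensor `E(A)`. -/
def knCombination (p q r : ℝ) : V → V → V → V → ℝ := fun X1 X2 X3 X4 =>
  KN (fun x y => g x y) (fun x y => g (a (a x)) y) X1 X2 X3 X4
    + p * KN (fun x y => g (a x) y) (fun x y => g (a x) y) X1 X2 X3 X4
    - q * KN (fun x y => g x y) (fun x y => g (a x) y) X1 X2 X3 X4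
    + r * KN (fun x y => g x y) (fun x y => g x y) X1 X2 X3 X4

variable {g a} {p q r : ℝ}

theorem smul_add_smul_add_smul_eq_zero_of_knCombination_eq_zero (hgs : ∀ X Y, g X Y = g Y X)
    (ha : ∀ X Y, g (a X) Y = g (a Y) X) (hgn : g.Nondegenerate)
    (hE : ∀ X1 X2 X3 X4, knCombination g a p q r X1 X2 X3 X4 = 0) {X Z : V} (hXZ : g X Z = 0)
    (hXaZ : g X (a Z) = 0) (hXaaZ : g X (a (a Z)) = 0) (Y : V) :
    (g Y (a (a Z)) - q * g Y (a Z) + 2 * r * g Y Z) • X + g Y Z • a (a X)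
      + (2 * p * g Y (a Z) - q * g Y Z) • a X = 0 := by
  have hsa : ∀ X Y, g (a X) Y = g X (a Y) := fun X Y => (ha X Y).trans (hgs _ _)
  have hXaZ' : g (a X) Z = 0 := by rw [hsa]; exact hXaZ
  have hXaaZ' : g (a (a X)) Z = 0 := by rw [hsa, hsa]; exact hXaaZ
  have hYaZ : g (a Y) Z = g Y (a Z) := hsa _ _
  have hYaaZ : g (a (a Y)) Z = g Y (a (a Z)) := by rw [hsa, hsa]
  refine hgn.1 _ fun W => ?_
  have h := hE X Y Z W
  simp only [knCombination, KN, hXZ, hXaZ', hXaaZ', hYaZ, hYaaZ] at h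
  simp only [map_add, map_smul, LinearMap.add_apply, LinearMap.smul_apply, smul_eq_mul]
  linear_combination h

theorem exists_apply_apply_eq_of_knCombination_eq_zero [FiniteDimensional ℝ V]
    (hgs : ∀ X Y, g X Y = g Y X) (ha : ∀ X Y, g (a X) Y = g (a Y) X) (hgn : g.Nondegenerate)
    (hn : 4 ≤ finrank ℝ V) (hE : ∀ X1 X2 X3 X4, knCombination g a p q r X1 X2 X3 X4 = 0)
    (Z : V) : ∃ ρ β : ℝ, a (a Z) = ρ • a Z + β • Z := by
  by_contra hZ
  have haaZ : a (a Z) ∉ Submodule.span ℝ {Z, a Z} := fun hmem => by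
    obtain ⟨β, ρ, hβρ⟩ := Submodule.mem_span_pair.mp hmem
    exact hZ ⟨ρ, β, by rw [← hβρ, add_comm]⟩
  obtain ⟨Y, hYaaZ, hYS⟩ := LinearMap.BilinForm.exists_apply_eq_one_of_notMem hgn haaZ
  obtain ⟨X, hX0, hX⟩ := g.exists_ne_zero_forall_apply_eq_zero ![Z, a Z, a (a Z)] (by simpa)
  have h := smul_add_smul_add_smul_eq_zero_of_knCombination_eq_zero (Z := Z) hgs ha hgn hE
    (hX 0) (hX 1) (hX 2) Y
  rw [hYaaZ, hYS Z (Submodule.subset_span (by simp)),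
    hYS (a Z) (Submodule.subset_span (by simp))] at h
  exact hX0 (by simpa using h)

theorem mul_sq_eq_of_knCombination_eq_zero [FiniteDimensional ℝ V]
    (hgs : ∀ X Y, g X Y = g Y X) (ha : ∀ X Y, g (a X) Y = g (a Y) X) (hgn : g.Nondegenerate)
    (hn : 4 ≤ finrank ℝ V) (hE : ∀ X1 X2 X3 X4, knCombination g a p q r X1 X2 X3 X4 = 0)
    {ρ β : ℝ} (hρβ : ∀ v, a (a v) = ρ • a v + β • v) {Z : V}
    (hZ : LinearIndependent ℝ ![Z, a Z]) (hp : p ≠ 0) {μ : ℝ} (hμ : 2 * p * μ = q - ρ) :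
    p * μ ^ 2 = β + r := by
  obtain ⟨X, hX0, hX⟩ := g.exists_ne_zero_forall_apply_eq_zero ![Z, a Z, a (a Z)] (by simpa)
  have hcomb := smul_add_smul_add_smul_eq_zero_of_knCombination_eq_zero (Z := Z) hgs ha hgn hE
    (hX 0) (hX 1) (hX 2)
  have haZ : a Z ∉ Submodule.span ℝ {Z} := by
    simpa [Submodule.mem_span_singleton] using
      (linearIndependent_fin2.mp (LinearIndependent.pair_symm_iff.mp hZ)).2
  have hZ' : Z ∉ Submodule.span ℝ {a Z} := by
    simpa [Submodule.mem_span_singleton] using (linearIndependent_fin2.mp hZ).2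
  obtain ⟨Y₁, hY₁aZ, hY₁Z⟩ := LinearMap.BilinForm.exists_apply_eq_one_of_notMem hgn haZ
  obtain ⟨Y₂, hY₂Z, hY₂aZ⟩ := LinearMap.BilinForm.exists_apply_eq_one_of_notMem hgn hZ'
  have h₁ := hcomb Y₁
  have h₂ := hcomb Y₂
  simp only [hρβ Z, map_add, map_smul, smul_eq_mul, hY₁aZ, hY₂Z,
    hY₁Z Z (Submodule.mem_span_singleton_self Z),
    hY₂aZ (a Z) (Submodule.mem_span_singleton_self _)] at h₁ h₂
  have haX : a X = μ • X := by
    refine smul_right_injective V (mul_ne_zero two_ne_zero hp) ?_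
    show (2 * p) • a X = (2 * p) • μ • X
    rw [smul_smul, hμ]
    linear_combination (norm := module) h₁
  have hμ₂ : (β + 2 * r + μ ^ 2 - q * μ) • X = 0 := by
    rw [haX, map_smul, haX] at h₂
    linear_combination (norm := module) h₂
  have hμ₃ : (μ ^ 2 - ρ * μ - β) • X = 0 := by
    have := hρβ X
    rw [haX, map_smul, haX] at this
    linear_combination (norm := module) this
  have e₂ := (smul_eq_zero.mp hμ₂).resolve_right hX0
  have e₃ := (smul_eq_zero.mp hμ₃).resolve_right hX0
  linear_combination (1 / 2 : ℝ) * μ * hμ - (1 / 2 : ℝ) * e₂ + (1 / 2 : ℝ) * e₃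

theorem kn_self_eq_zero_of_knCombination_eq_zero
    (hE : ∀ X1 X2 X3 X4, knCombination g a p q r X1 X2 X3 X4 = 0)
    {ρ β : ℝ} (hρβ : ∀ v, a (a v) = ρ • a v + β • v) (hp : p ≠ 0) {μ : ℝ}
    (hμ : 2 * p * μ = q - ρ) (hμ₂ : p * μ ^ 2 = β + r) (X1 X2 X3 X4 : V) :
    KN (fun x y => g (a x) y - μ * g x y) (fun x y => g (a x) y - μ * g x y) X1 X2 X3 X4 = 0 := by
  have hA2 : ∀ x y, g (a (a x)) y = ρ * g (a x) y + β * g x y := fun x y => by simp [hρβ]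
  have h := hE X1 X2 X3 X4
  simp only [knCombination] at h
  have hexp : KN (fun x y => g (a x) y - μ * g x y) (fun x y => g (a x) y - μ * g x y) X1 X2 X3 X4
      = KN (fun x y => g (a x) y) (fun x y => g (a x) y) X1 X2 X3 X4
        - 2 * μ * KN (fun x y => g x y) (fun x y => g (a x) y) X1 X2 X3 X4
        + μ ^ 2 * KN (fun x y => g x y) (fun x y => g x y) X1 X2 X3 X4 := by
    simp only [KN]; ring
  have hsq : KN (fun x y => g x y) (fun x y => g (a (a x)) y) X1 X2 X3 X4
      = ρ * KN (fun x y => g x y) (fun x y => g (a x) y) X1 X2 X3 X4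
        + β * KN (fun x y => g x y) (fun x y => g x y) X1 X2 X3 X4 := by
    simp only [KN, hA2]; ring
  refine (mul_eq_zero.mp ?_).resolve_left hp
  rw [hexp]
  linear_combination h - hsq - KN (fun x y => g x y) (fun x y => g (a x) y) X1 X2 X3 X4 * hμ
    + KN (fun x y => g x y) (fun x y => g x y) X1 X2 X3 X4 * hμ₂

end KNCombination

/-- if a symmetric (0,2)-tensor `A`, not proportional to `g`, satisfies
`E(A) = 0`, then `A² − (tr(A²)/n) g = ρ (A − (tr A/n) g)` for some scalar `ρ`, and
`(A − ((tr A − ρ)/(n−2)) g) ∧ (A − ((tr A − ρ)/(n−2)) g) = 0`. -/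
theorem statement_11 [FiniteDimensional ℝ V] (hn : 4 ≤ finrank ℝ V)
    (g : LinearMap.BilinForm ℝ V) (hgs : ∀ X Y, g X Y = g Y X)
    (hgn : g.Nondegenerate)
    (a : V →ₗ[ℝ] V) (ha : ∀ X Y, g (a X) Y = g (a Y) X)
    (hnp : ¬ ∀ X Y, g (a X) Y = (LinearMap.trace ℝ V a / (finrank ℝ V : ℝ)) * g X Y)
    (hEA : ∀ X1 X2 X3 X4 : V,
      KN (fun x y => g x y) (fun x y => g (a (a x)) y) X1 X2 X3 X4
        + (((finrank ℝ V : ℝ) - 2) / 2)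
            * KN (fun x y => g (a x) y) (fun x y => g (a x) y) X1 X2 X3 X4
        - LinearMap.trace ℝ V a * KN (fun x y => g x y) (fun x y => g (a x) y) X1 X2 X3 X4
        + (((LinearMap.trace ℝ V a) ^ 2 - LinearMap.trace ℝ V (a ∘ₗ a))
              / (2 * ((finrank ℝ V : ℝ) - 1)))
            * KN (fun x y => g x y) (fun x y => g x y) X1 X2 X3 X4
        = 0) :
    ∃ ρ : ℝ,
      (∀ X Y : V,
        g (a (a X)) Y - (LinearMap.trace ℝ V (a ∘ₗ a) / (finrank ℝ V : ℝ)) * g X Y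
          = ρ * (g (a X) Y - (LinearMap.trace ℝ V a / (finrank ℝ V : ℝ)) * g X Y)) ∧
      (∀ X1 X2 X3 X4 : V,
        KN (fun x y => g (a x) y
              - ((LinearMap.trace ℝ V a - ρ) / ((finrank ℝ V : ℝ) - 2)) * g x y)
           (fun x y => g (a x) y
              - ((LinearMap.trace ℝ V a - ρ) / ((finrank ℝ V : ℝ) - 2)) * g x y)
           X1 X2 X3 X4 = 0) := by
  have hn' : (4 : ℝ) ≤ finrank ℝ V := by exact_mod_cast hn
  have hn0 : (finrank ℝ V : ℝ) ≠ 0 := by intro h; linarith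
  have hn2 : (finrank ℝ V : ℝ) - 2 ≠ 0 := by intro h; linarith
  have hp : ((finrank ℝ V : ℝ) - 2) / 2 ≠ 0 := div_ne_zero hn2 two_ne_zero
  obtain ⟨ρ, β, hρβ⟩ := Module.End.exists_forall_apply_apply_eq_of_forall_exists a
    (exists_apply_apply_eq_of_knCombination_eq_zero hgs ha hgn hn hEA)
  obtain ⟨Z, hZ⟩ : ∃ Z, LinearIndependent ℝ ![Z, a Z] := by
    by_contra! h
    obtain ⟨c, rfl⟩ := LinearMap.exists_eq_smul_id_of_forall_notLinearIndependent h
    refine hnp fun X Y => ?_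
    simp [LinearMap.trace_one, hn0]
  have hμ : 2 * (((finrank ℝ V : ℝ) - 2) / 2)
        * ((LinearMap.trace ℝ V a - ρ) / ((finrank ℝ V : ℝ) - 2))
      = LinearMap.trace ℝ V a - ρ := by
    field_simp
  refine ⟨ρ, fun X Y => ?_, kn_self_eq_zero_of_knCombination_eq_zero hEA hρβ hp hμ
    (mul_sq_eq_of_knCombination_eq_zero hgs ha hgn hn hEA hρβ hZ hp hμ)⟩
  rw [LinearMap.trace_comp_self_of_forall_apply_apply_eq hρβ, hρβ]
  simp only [map_add, map_smul, LinearMap.add_apply, LinearMap.smul_apply, smul_eq_mul]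
  field_simp
  ring
end

section
/- Let T be a Roter type generalized curvature tensor, i.e., T = (φ/2) Ric(T) ∧ Ric(T) + μ g ∧ Ric(T) + η G with φ ≠ 0, and suppose (Ric(T))² = α₁ Ric(T) + α₂ g where α₁ = κ(T) + φ⁻¹((n−2)μ − 1) and α₂ = φ⁻¹(μκ(T) + (n−1)η). Then T · T = L_T Q(g,T) with L_T = φ⁻¹((n−2)(μ² − φη) − μ). -/
open Module

variable {V : Type*} [AddCommGroup V] [Module ℝ V]

/-- Derivation action of an endomorphism `O` on a (0,4)-tensor `T`. -/
def Tder (O : V → V) (T : V → V → V → V → ℝ) : V → V → V → V → ℝ := fun X1 X2 X3 X4 =>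
  -(T (O X1) X2 X3 X4) - T X1 (O X2) X3 X4 - T X1 X2 (O X3) X4 - T X1 X2 X3 (O X4)

set_option maxHeartbeats 16000000 in
/-- a Roter type tensor `T = (φ/2) Ric(T) ∧ Ric(T) + μ g ∧ Ric(T) + η G`
with `φ ≠ 0` and `(Ric T)² = α₁ Ric(T) + α₂ g` satisfies `T · T = L_T Q(g,T)` with
`L_T = φ⁻¹((n−2)(μ² − φη) − μ)`.  Here `s` is the `g`-raised Ricci tensor
(`Ric(T) X Y = g (s X) Y`, `κ(T) = tr s`). -/
theorem statement_14 [FiniteDimensional ℝ V] (hn : 4 ≤ finrank ℝ V)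
    (g : LinearMap.BilinForm ℝ V) (hgs : ∀ X Y, g X Y = g Y X)
    (hgn : g.Nondegenerate)
    (s : V →ₗ[ℝ] V) (hs : ∀ X Y, g (s X) Y = g (s Y) X)
    (φ μ η : ℝ) (hφ : φ ≠ 0)
    (hS2 : ∀ X Y, g (s (s X)) Y
      = (LinearMap.trace ℝ V s + φ⁻¹ * (((finrank ℝ V : ℝ) - 2) * μ - 1)) * g (s X) Y
        + (φ⁻¹ * (μ * LinearMap.trace ℝ V s + ((finrank ℝ V : ℝ) - 1) * η)) * g X Y)
    (X1 X2 X3 X4 X Y : V) :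
    Tder
      (fun Z => (φ * g (s Y) Z) • s X - (φ * g (s X) Z) • s Y
        + (μ * g (s Y) Z) • X + (μ * g Y Z) • s X - (μ * g X Z) • s Y - (μ * g (s X) Z) • Y
        + (η * g Y Z) • X - (η * g X Z) • Y)
      (fun a b c d =>
        (φ / 2) * KN (fun x y => g (s x) y) (fun x y => g (s x) y) a b c d
          + μ * KN (fun x y => g x y) (fun x y => g (s x) y) a b c d
          + η * ((1/2) * KN (fun x y => g x y) (fun x y => g x y) a b c d))
      X1 X2 X3 X4
      = (φ⁻¹ * (((finrank ℝ V : ℝ) - 2) * (μ ^ 2 - φ * η) - μ))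
          * Tach (fun x y => g x y)
              (fun a b c d =>
                (φ / 2) * KN (fun x y => g (s x) y) (fun x y => g (s x) y) a b c d
                  + μ * KN (fun x y => g x y) (fun x y => g (s x) y) a b c d
                  + η * ((1/2) * KN (fun x y => g x y) (fun x y => g x y) a b c d))
              X1 X2 X3 X4 X Y := by
  have hS2' : ∀ A B : V, g (s A) (s B)
      = (LinearMap.trace ℝ V s + φ⁻¹ * (((finrank ℝ V : ℝ) - 2) * μ - 1)) * g (s A) B
        + (φ⁻¹ * (μ * LinearMap.trace ℝ V s + ((finrank ℝ V : ℝ) - 1) * η)) * g A B := by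
    intro A B
    rw [hs A (s B), hS2 B A, hs B A, hgs B A]
  have hφ' : φ * φ⁻¹ = 1 := mul_inv_cancel₀ hφ
  simp only [Tder, Tach, KN, wedgeEnd, map_add, map_sub, map_smul, LinearMap.add_apply,
    LinearMap.sub_apply, LinearMap.smul_apply, smul_eq_mul]
  simp only [hS2, hS2']
  simp only [hgs X2 X1, hs X2 X1, hgs X3 X1, hs X3 X1, hgs X3 X2, hs X3 X2, hgs X4 X1,
    hs X4 X1, hgs X4 X2, hs X4 X2, hgs X4 X3, hs X4 X3, hgs X X1, hs X X1, hgs X X2,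
    hs X X2, hgs X X3, hs X X3, hgs X X4, hs X X4, hgs Y X1, hs Y X1, hgs Y X2, hs Y X2,
    hgs Y X3, hs Y X3, hgs Y X4, hs Y X4, hgs Y X, hs Y X, hgs X1 (s X), hgs X1 (s Y),
    hgs X2 (s X), hgs X2 (s Y), hgs X3 (s X), hgs X3 (s Y), hgs X4 (s X), hgs X4 (s Y),
    hgs X (s X), hgs X (s Y), hgs Y (s X), hgs Y (s Y)]
  field_simp
  ring
end

section
/- Let H be a symmetric (0,2)-tensor of rank 2 on an n-dimensional (n ≥ 3) space, and let R = ε·(1/2) H ∧ H + (κ̃/(n(n+1))) G be the Gauss-equation curvature tensor of a type-number-two hypersurface in a space of constant curvature. Then R · R = (κ̃/(n(n+1))) Q(g,R), i.e., the hypersurface is pseudosymmetric of constant type. -/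
open Module

variable {V : Type*} [AddCommGroup V] [Module ℝ V]

/-- a type number two hypersurface (`rank H = 2`) in a space of constant
curvature is pseudosymmetric of constant type: `R · R = (κ̃/(n(n+1))) Q(g,R)` for
the Gauss-equation tensor `R = ε·(1/2) H ∧ H + (κ̃/(n(n+1))) G`.  Here
`H X Y = g (h X) Y` and the curvature endomorphism `ℛ(X,Y)` of `R` is made explicit. -/
theorem statement_17 [FiniteDimensional ℝ V] (hn : 3 ≤ finrank ℝ V)
    (g : LinearMap.BilinForm ℝ V) (hgs : ∀ X Y, g X Y = g Y X)
    (hgn : g.Nondegenerate)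
    (h : V →ₗ[ℝ] V) (hh : ∀ X Y, g (h X) Y = g (h Y) X)
    (hrank : finrank ℝ (LinearMap.range h) = 2)
    (ε : ℝ) (hε : ε = 1 ∨ ε = -1) (κt : ℝ)
    (X1 X2 X3 X4 X Y : V) :
    Tder
      (fun Z => (ε * g (h Y) Z) • h X - (ε * g (h X) Z) • h Y
        + ((κt / ((finrank ℝ V : ℝ) * ((finrank ℝ V : ℝ) + 1))) * g Y Z) • X
        - ((κt / ((finrank ℝ V : ℝ) * ((finrank ℝ V : ℝ) + 1))) * g X Z) • Y)
      (fun a b c d =>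
        ε * ((1/2) * KN (fun x y => g (h x) y) (fun x y => g (h x) y) a b c d)
          + (κt / ((finrank ℝ V : ℝ) * ((finrank ℝ V : ℝ) + 1)))
              * ((1/2) * KN (fun x y => g x y) (fun x y => g x y) a b c d))
      X1 X2 X3 X4
      = (κt / ((finrank ℝ V : ℝ) * ((finrank ℝ V : ℝ) + 1)))
          * Tach (fun x y => g x y)
              (fun a b c d =>
                ε * ((1/2) * KN (fun x y => g (h x) y) (fun x y => g (h x) y) a b c d)
                  + (κt / ((finrank ℝ V : ℝ) * ((finrank ℝ V : ℝ) + 1)))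
                      * ((1/2) * KN (fun x y => g x y) (fun x y => g x y) a b c d))
              X1 X2 X3 X4 X Y := by
  classical
  obtain ⟨e1, e2, s, t, u, key⟩ : ∃ (e1 e2 : V) (s t u : ℝ), ∀ Z : V,
      h Z = (s * g e1 Z + t * g e2 Z) • e1 + (t * g e1 Z + u * g e2 Z) • e2 := by
    let B := Module.finBasisOfFinrankEq (R := ℝ) (M := LinearMap.range h) hrank
    set e1 : V := (B 0 : V) with he1
    set e2 : V := (B 1 : V) with he2
    have hdecomp : ∀ Z : V, ∃ a b : ℝ, h Z = a • e1 + b • e2 := by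
      intro Z
      have hz : h Z ∈ LinearMap.range h := LinearMap.mem_range_self h Z
      refine ⟨B.repr ⟨h Z, hz⟩ 0, B.repr ⟨h Z, hz⟩ 1, ?_⟩
      have h1 := B.sum_repr ⟨h Z, hz⟩
      rw [Fin.sum_univ_two] at h1
      have h2 := congrArg (Submodule.subtype (LinearMap.range h)) h1
      simpa [he1, he2] using h2.symm
    choose a b hab using hdecomp
    obtain ⟨φ1, hφ1⟩ := LinearMap.exists_extend (B.coord 0)
    obtain ⟨φ2, hφ2⟩ := LinearMap.exists_extend (B.coord 1)
    set w1 : V := (g.toDual hgn).symm φ1 with hw1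
    set w2 : V := (g.toDual hgn).symm φ2 with hw2
    have hφe : ∀ (φ : Module.Dual ℝ V) (i j : Fin 2),
        φ.comp (LinearMap.range h).subtype = B.coord i →
        φ (B j : V) = if j = i then 1 else 0 := by
      intro φ i j hφ
      have : φ ((LinearMap.range h).subtype (B j)) = B.coord i (B j) := by rw [← hφ]; rfl
      simpa [Basis.coord_apply, Basis.repr_self, Finsupp.single_apply] using this
    have hg11 : g e1 w1 = 1 := by
      rw [hgs, hw1, LinearMap.BilinForm.apply_toDual_symm_apply]
      simpa using hφe φ1 0 0 hφ1
    have hg21 : g e2 w1 = 0 := by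
      rw [hgs, hw1, LinearMap.BilinForm.apply_toDual_symm_apply]
      simpa using hφe φ1 0 1 hφ1
    have hg12 : g e1 w2 = 0 := by
      rw [hgs, hw2, LinearMap.BilinForm.apply_toDual_symm_apply]
      simpa using hφe φ2 1 0 hφ2
    have hg22 : g e2 w2 = 1 := by
      rw [hgs, hw2, LinearMap.BilinForm.apply_toDual_symm_apply]
      simpa using hφe φ2 1 1 hφ2
    have hsym : ∀ Z W' : V, a Z * g e1 W' + b Z * g e2 W'
        = a W' * g e1 Z + b W' * g e2 Z := by
      intro Z W'
      have h0 := hh Z W'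
      rw [hab Z, hab W'] at h0
      simpa [map_add, map_smul, LinearMap.add_apply, LinearMap.smul_apply,
        smul_eq_mul] using h0
    have ha' : ∀ Z, a Z = a w1 * g e1 Z + b w1 * g e2 Z := by
      intro Z
      have := hsym Z w1
      rw [hg11, hg21] at this
      linarith
    have hb' : ∀ Z, b Z = a w2 * g e1 Z + b w2 * g e2 Z := by
      intro Z
      have := hsym Z w2
      rw [hg12, hg22] at this
      linarith
    have hts : b w1 = a w2 := by
      have := hsym w1 w2
      rw [hg11, hg21, hg12, hg22] at this
      linarith
    refine ⟨e1, e2, a w1, b w1, b w2, fun Z => ?_⟩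
    rw [hab Z, ha' Z, hb' Z, hts]
  simp only [Tder, Tach, wedgeEnd, KN]
  simp only [key]
  simp only [map_add, map_sub, map_smul, LinearMap.add_apply, LinearMap.sub_apply,
    LinearMap.smul_apply, smul_eq_mul]
  simp only [hgs e2 e1,
    hgs X1 e1, hgs X2 e1, hgs X3 e1, hgs X4 e1, hgs X e1, hgs Y e1,
    hgs X1 e2, hgs X2 e2, hgs X3 e2, hgs X4 e2, hgs X e2, hgs Y e2,
    hgs X2 X1, hgs X3 X1, hgs X4 X1, hgs X X1, hgs Y X1,
    hgs X3 X2, hgs X4 X2, hgs X X2, hgs Y X2,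
    hgs X4 X3, hgs X X3, hgs Y X3,
    hgs X X4, hgs Y X4,
    hgs Y X]
  ring
end

section
/- Let R be the curvature tensor of a hypersurface in a space of constant curvature given by the Gauss equation R = ε·(1/2) H ∧ H + (κ̃/(n(n+1))) G. Then the identity R·R − (κ̃/(n(n+1))) Q(g,R) = −Q(H², (1/2) H ∧ H) holds. -/
open Module

variable {V : Type*} [AddCommGroup V] [Module ℝ V]

/-- for the Gauss-equation tensor
`R = ε·(1/2) H ∧ H + (κ̃/(n(n+1))) G` one has
`R·R − (κ̃/(n(n+1))) Q(g,R) = −Q(H², (1/2) H ∧ H)`. -/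
theorem statement_18 [FiniteDimensional ℝ V] (hn : 3 ≤ finrank ℝ V)
    (g : LinearMap.BilinForm ℝ V) (hgs : ∀ X Y, g X Y = g Y X)
    (hgn : g.Nondegenerate)
    (h : V →ₗ[ℝ] V) (hh : ∀ X Y, g (h X) Y = g (h Y) X)
    (ε : ℝ) (hε : ε = 1 ∨ ε = -1) (κt : ℝ)
    (X1 X2 X3 X4 X Y : V) :
    Tder
      (fun Z => (ε * g (h Y) Z) • h X - (ε * g (h X) Z) • h Y
        + ((κt / ((finrank ℝ V : ℝ) * ((finrank ℝ V : ℝ) + 1))) * g Y Z) • X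
        - ((κt / ((finrank ℝ V : ℝ) * ((finrank ℝ V : ℝ) + 1))) * g X Z) • Y)
      (fun a b c d =>
        ε * ((1/2) * KN (fun x y => g (h x) y) (fun x y => g (h x) y) a b c d)
          + (κt / ((finrank ℝ V : ℝ) * ((finrank ℝ V : ℝ) + 1)))
              * ((1/2) * KN (fun x y => g x y) (fun x y => g x y) a b c d))
      X1 X2 X3 X4
      - (κt / ((finrank ℝ V : ℝ) * ((finrank ℝ V : ℝ) + 1)))
          * Tach (fun x y => g x y)
              (fun a b c d =>
                ε * ((1/2) * KN (fun x y => g (h x) y) (fun x y => g (h x) y) a b c d)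
                  + (κt / ((finrank ℝ V : ℝ) * ((finrank ℝ V : ℝ) + 1)))
                      * ((1/2) * KN (fun x y => g x y) (fun x y => g x y) a b c d))
              X1 X2 X3 X4 X Y
      = - Tach (fun x y => g (h (h x)) y)
            (fun a b c d =>
              (1/2) * KN (fun x y => g (h x) y) (fun x y => g (h x) y) a b c d)
            X1 X2 X3 X4 X Y := by
  simp only [Tder, Tach, wedgeEnd, KN, map_add, map_sub, map_smul, LinearMap.add_apply,
    LinearMap.sub_apply, LinearMap.smul_apply, smul_eq_mul]
  simp only [hh Y X, hgs Y X, hh X1 X, hh X1 Y, hh X2 X, hh X2 Y,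
    hgs X1 (h X), hgs X1 (h Y), hgs X2 (h X), hgs X2 (h Y),
    hh X1 (h X), hh X1 (h Y), hh X2 (h X), hh X2 (h Y)]
  rcases hε with rfl | rfl <;> ring
end
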